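/- arXiv:1104.2293 — 8 statements merged into one kernel-verified Lean document; each statement's English description precedes it below -/
import Mathlib

section
/- Let (Σ, ⪯) be a partial order satisfying the finite chain property and let F be a finite set of inflationary functions on Σ. Then every regular iteration of F starting at a store σ₀ ∈ Σ eventually stabilizes: there exist an index k and σ' ∈ Σ such that σᵢ = σ' for all i ≥ k, σ₀ ⪯ σ', and σ' is a common fixpoint of the functions in F (f σ' = σ' for every f ∈ F). -/
/-- **Fixpoint Lemma.** Let `(α, ≤)` be a partial order satisfying the finite chain
property and `F` a finite set of inflationary functions on `α`. Then every regular
iteration of `F` starting at `σ 0` eventually stabilizes at a common fixpoint `σ'`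
of the functions in `F` with `σ 0 ≤ σ'`. -/
theorem regular_iteration_stabilizes_at_common_fixpoint
    {α : Type*} [PartialOrder α]
    (hfcp : ∀ c : ℕ → α, (∀ i, c i ≤ c (i + 1)) → ∃ j, ∀ i ≥ j, c i = c j)
    (F : Set (α → α)) (hFfin : F.Finite)
    (hinfl : ∀ f ∈ F, ∀ x : α, x ≤ f x)
    (σ : ℕ → α) (fs : ℕ → α → α)
    (hmem : ∀ i, fs i ∈ F)
    (hstep : ∀ i, σ (i + 1) = fs i (σ i))
    (hreg : ∀ f ∈ F, ∀ i, f (σ i) ≠ σ i → ∃ j ≥ i, fs j = f) :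
    ∃ (k : ℕ) (σ' : α), (∀ i ≥ k, σ i = σ') ∧ σ 0 ≤ σ' ∧ ∀ f ∈ F, f σ' = σ' := by
  have hmono : ∀ i, σ i ≤ σ (i + 1) := by
    intro i
    rw [hstep i]
    exact hinfl _ (hmem i) _
  obtain ⟨j, hj⟩ := hfcp σ hmono
  refine ⟨j, σ j, hj, ?_, ?_⟩
  · exact monotone_nat_of_le_succ hmono (Nat.zero_le j)
  · intro f hf
    by_contra hne
    obtain ⟨m, hm, hfm⟩ := hreg f hf j (by rwa [hj j le_rfl] at hne ⊢)
    have h1 : σ (m + 1) = σ j := hj (m + 1) (le_trans hm (Nat.le_succ m))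
    have h2 : σ m = σ j := hj m hm
    rw [hstep m, hfm, h2] at h1
    exact hne h1
end

section
/- Let (Σ, ⪯) be a partial order satisfying the finite chain property and let F be a finite set of functions on Σ that are both inflationary and monotone. Let (σᵢ)ᵢ∈ℕ be a regular iteration of F starting at σ₀, stabilizing at σ' (i.e., there is k with σᵢ = σ' for all i ≥ k). Then σ' is the least common fixpoint of F above σ₀: for every τ ∈ Σ with σ₀ ⪯ τ and f τ = τ for all f ∈ F, we have σ' ⪯ τ. -/
/-- If the functions in `F` are moreover monotone, a regular iteration stabilizes at
the least common fixpoint of `F` above the starting store `σ 0`. -/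
theorem regular_iteration_stabilizes_at_least_common_fixpoint
    {α : Type*} [PartialOrder α]
    (hfcp : ∀ c : ℕ → α, (∀ i, c i ≤ c (i + 1)) → ∃ j, ∀ i ≥ j, c i = c j)
    (F : Set (α → α)) (hFfin : F.Finite)
    (hinfl : ∀ f ∈ F, ∀ x : α, x ≤ f x)
    (hmono : ∀ f ∈ F, ∀ x y : α, x ≤ y → f x ≤ f y)
    (σ : ℕ → α) (fs : ℕ → α → α)
    (hmem : ∀ i, fs i ∈ F)
    (hstep : ∀ i, σ (i + 1) = fs i (σ i))
    (hreg : ∀ f ∈ F, ∀ i, f (σ i) ≠ σ i → ∃ j ≥ i, fs j = f)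
    (k : ℕ) (σ' : α) (hstab : ∀ i ≥ k, σ i = σ') :
    ∀ τ : α, σ 0 ≤ τ → (∀ f ∈ F, f τ = τ) → σ' ≤ τ := by
  intro τ h0 hfix
  have h : ∀ i, σ i ≤ τ := by
    intro i
    induction i with
    | zero => exact h0
    | succ n ih =>
      rw [hstep n]
      calc fs n (σ n) ≤ fs n τ := hmono _ (hmem n) _ _ ih
        _ = τ := hfix _ (hmem n)
  rw [← hstab k le_rfl]
  exact h k
end

section
/- (Worklist convergence, abstract form of Theorem 1.) Let (Σ, ⪯) be a partial order satisfying the finite chain property and let F be a finite set of inflationary functions on Σ. Consider sequences (σᵢ)ᵢ∈ℕ in Σ and (Sᵢ)ᵢ∈ℕ of finite subsets of F such that: {f ∈ F | f σ₀ ≠ σ₀} ⊆ S₀ ⊆ F; for every i with Sᵢ ≠ ∅ there is cᵢ ∈ Sᵢ with σᵢ₊₁ = cᵢ(σᵢ) and Sᵢ₊₁ = (Sᵢ \ {cᵢ}) ∪ {f ∈ F | f σᵢ₊₁ ≠ σᵢ₊₁}; and for every i with Sᵢ = ∅, σᵢ₊₁ = σᵢ and Sᵢ₊₁ = Sᵢ.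 Then there exists N such that S_N = ∅, σ₀ ⪯ σ_N, and σ_N is a common fixpoint of all functions in F. -/
/-- **Worklist convergence (abstract form of Theorem 1).** A worklist-driven solver
that schedules all unsatisfied inflationary constraints terminates with an empty
scheduling set at a common fixpoint above the initial store. -/
theorem worklist_solver_converges
    {α : Type*} [PartialOrder α]
    (hfcp : ∀ c : ℕ → α, (∀ i, c i ≤ c (i + 1)) → ∃ j, ∀ i ≥ j, c i = c j)
    (F : Set (α → α)) (hFfin : F.Finite)
    (hinfl : ∀ f ∈ F, ∀ x : α, x ≤ f x)
    (σ : ℕ → α) (S : ℕ → Set (α → α))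
    (hSsub : ∀ i, S i ⊆ F)
    (hS0 : {f ∈ F | f (σ 0) ≠ σ 0} ⊆ S 0)
    (hstep : ∀ i, S i ≠ ∅ →
      ∃ c ∈ S i, σ (i + 1) = c (σ i) ∧
        S (i + 1) = (S i \ {c}) ∪ {f ∈ F | f (σ (i + 1)) ≠ σ (i + 1)})
    (hempty : ∀ i, S i = ∅ → σ (i + 1) = σ i ∧ S (i + 1) = S i) :
    ∃ N, S N = ∅ ∧ σ 0 ≤ σ N ∧ ∀ f ∈ F, f (σ N) = σ N := by
  -- monotonicity
  have hmono : ∀ i, σ i ≤ σ (i + 1) := by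
    intro i
    by_cases h : S i = ∅
    · exact ((hempty i h).1).ge
    · obtain ⟨c, hc, hσ, _⟩ := hstep i h
      rw [hσ]; exact hinfl c (hSsub i hc) (σ i)
  have hmono' : Monotone σ := monotone_nat_of_le_succ hmono
  -- invariant: unsatisfied functions are scheduled
  have hinv : ∀ i, {f ∈ F | f (σ i) ≠ σ i} ⊆ S i := by
    intro i
    induction i with
    | zero => exact hS0
    | succ i ih =>
      by_cases h : S i = ∅
      · obtain ⟨h1, h2⟩ := hempty i h
        rw [h1, h2]; exact ih
      · obtain ⟨c, hc, hσ, hS⟩ := hstep i h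
        rw [hS]; exact Set.subset_union_right
  -- stabilization point
  obtain ⟨j, hj⟩ := hfcp σ hmono
  -- after stabilization, each nonempty step strictly shrinks S
  have hshrink : ∀ i ≥ j, S i ≠ ∅ → ∃ c ∈ S i, S (i + 1) = S i \ {c} := by
    intro i hi hne
    obtain ⟨c, hc, hσ, hS⟩ := hstep i hne
    have hσeq : σ (i + 1) = σ i := by
      rw [hj (i + 1) (le_trans hi (Nat.le_succ i)), hj i hi]
    refine ⟨c, hc, ?_⟩
    rw [hS]
    have hU : {f ∈ F | f (σ (i + 1)) ≠ σ (i + 1)} ⊆ S i \ {c} := by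
      intro f hf
      have hfS : f ∈ S i := hinv i (by rwa [hσeq] at hf)
      refine ⟨hfS, ?_⟩
      simp only [Set.mem_singleton_iff]
      rintro rfl
      exact hf.2 (by rw [hσeq, ← hσ, hσeq])
    exact Set.union_eq_self_of_subset_right hU
  -- cardinality argument
  have hfin : ∀ i, (S i).Finite := fun i => hFfin.subset (hSsub i)
  have hcard : ∀ k, S (j + k) ≠ ∅ → (S (j + k)).ncard + k ≤ (S j).ncard := by
    intro k
    induction k with
    | zero => intro _; simp
    | succ k ih =>
      rw [show j + (k+1) = (j + k) + 1 from rfl]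
      intro hne
      have hne' : S (j + k) ≠ ∅ := by
        intro h
        exact hne (by rw [(hempty _ h).2, h])
      obtain ⟨c, hc, hS⟩ := hshrink (j + k) (Nat.le_add_right j k) hne'
      have hlt : (S (j + k + 1)).ncard < (S (j + k)).ncard := by
        rw [hS]
        exact Set.ncard_diff_singleton_lt_of_mem hc (hfin _)
      have := ih hne'
      omega
  have hex : ∃ N, S N = ∅ := by
    by_contra h
    push_neg at h
    have := hcard ((S j).ncard + 1) (Set.nonempty_iff_ne_empty.mp (h _))
    omega
  obtain ⟨N, hN⟩ := hex
  refine ⟨N, hN, hmono' (Nat.zero_le N), fun f hf => ?_⟩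
  by_contra hne
  have : f ∈ S N := hinv N ⟨hf, hne⟩
  rw [hN] at this
  exact this
end

section
/- For a circuit g on n gates in topological order, and for every store σ : Fin n → Val and every gate i : Fin n: (a) if σ is correct at gate i (σ i = g i σ), then f i σ = σ; (b) if σ is not correct at gate i, then b(f i σ) < b(σ). In particular b(f i σ) ≤ b(σ) always holds. -/
/-- The gate-update function: set coordinate `i` to the value computed by gate `i`. -/
def gateUpdate {Val : Type*} {n : ℕ} (g : Fin n → (Fin n → Val) → Val)
    (i : Fin n) (σ : Fin n → Val) : Fin n → Val :=
  Function.update σ i (g i σ)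

/-- The potential of a store: incorrect gates weighted decreasingly along the
topological order, `b σ = Σ_i 2^(n-1-i) · χ_σ(i)`. -/
def pot {Val : Type*} [DecidableEq Val] {n : ℕ}
    (g : Fin n → (Fin n → Val) → Val) (σ : Fin n → Val) : ℕ :=
  ∑ i : Fin n, 2 ^ (n - 1 - (i : ℕ)) * (if σ i = g i σ then 0 else 1)

lemma sum_range_two_pow_lt (m : ℕ) : ∑ k ∈ Finset.range m, 2 ^ k < 2 ^ m := by
  induction m with
  | zero => simp
  | succ m ih =>
    rw [Finset.sum_range_succ, pow_succ]
    omega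

lemma sum_gt_two_pow_lt {n : ℕ} (i : Fin n) :
    ∑ j ∈ Finset.univ.filter (fun j : Fin n => i < j), 2 ^ (n - 1 - (j : ℕ))
      < 2 ^ (n - 1 - (i : ℕ)) := by
  have h : ∑ j ∈ Finset.univ.filter (fun j : Fin n => i < j), 2 ^ (n - 1 - (j : ℕ))
      = ∑ k ∈ Finset.range (n - 1 - (i : ℕ)), 2 ^ k := by
    apply Finset.sum_nbij' (i := fun j : Fin n => n - 1 - (j : ℕ))
      (j := fun k => (⟨n - 1 - k, by have := i.isLt; omega⟩ : Fin n))
    · intro j hj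
      simp only [Finset.mem_filter, Finset.mem_univ, true_and, Fin.lt_def] at hj
      have := j.isLt
      simp only [Finset.mem_range]
      omega
    · intro k hk
      simp only [Finset.mem_range] at hk
      simp only [Finset.mem_filter, Finset.mem_univ, true_and, Fin.lt_def]
      have := i.isLt
      omega
    · intro j hj
      simp only [Finset.mem_filter, Finset.mem_univ, true_and, Fin.lt_def] at hj
      have := j.isLt
      ext
      simp
      omega
    · intro k hk
      simp only [Finset.mem_range] at hk
      have := i.isLt
      simp
      omega
    · intro j hj; rfl
  calc _ = ∑ k ∈ Finset.range (n - 1 - (i : ℕ)), 2 ^ k := h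
    _ < _ := sum_range_two_pow_lt _

/-- For a circuit in topological order: (a) updating a correct gate leaves the store
unchanged; (b) updating an incorrect gate strictly decreases the potential; in
particular the potential never increases under a gate update. -/
theorem gateUpdate_potential
    {Val : Type*} [DecidableEq Val] {n : ℕ}
    (g : Fin n → (Fin n → Val) → Val)
    (htopo : ∀ (i : Fin n) (σ σ' : Fin n → Val),
      (∀ j : Fin n, j < i → σ j = σ' j) → g i σ = g i σ')
    (σ : Fin n → Val) (i : Fin n) :
    (σ i = g i σ → gateUpdate g i σ = σ) ∧
    (σ i ≠ g i σ → pot g (gateUpdate g i σ) < pot g σ) ∧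
    pot g (gateUpdate g i σ) ≤ pot g σ := by
  have ha : σ i = g i σ → gateUpdate g i σ = σ := by
    intro h
    unfold gateUpdate
    rw [← h, Function.update_eq_self]
  have hb : σ i ≠ g i σ → pot g (gateUpdate g i σ) < pot g σ := by
    intro hne
    set σ' := gateUpdate g i σ with hσ'
    have hnoteq : ∀ j : Fin n, j ≠ i → σ' j = σ j := fun j hj =>
      Function.update_of_ne hj _ _
    have heqi : σ' i = g i σ := Function.update_self _ _ _
    have hg : ∀ j : Fin n, j ≤ i → g j σ' = g j σ := by
      intro j hj
      exact htopo j σ' σ (fun k hk => hnoteq k (by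
        intro hki; rw [hki] at hk; exact absurd (lt_of_lt_of_le hk hj) (lt_irrefl i)))
    -- term function
    set t : (Fin n → Val) → Fin n → ℕ :=
      fun τ j => 2 ^ (n - 1 - (j : ℕ)) * (if τ j = g j τ then 0 else 1) with ht
    have hsplit : ∀ τ : Fin n → Val, pot g τ =
        (∑ j ∈ Finset.univ.filter (fun j : Fin n => j < i), t τ j) + t τ i
          + ∑ j ∈ Finset.univ.filter (fun j : Fin n => i < j), t τ j := by
      intro τ
      have h1 : pot g τ = (∑ j ∈ Finset.univ.filter (fun j : Fin n => j < i), t τ j)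
          + ∑ j ∈ Finset.univ.filter (fun j : Fin n => ¬ j < i), t τ j :=
        (Finset.sum_filter_add_sum_filter_not _ _ _).symm
      have h2 : Finset.univ.filter (fun j : Fin n => ¬ j < i)
          = insert i (Finset.univ.filter (fun j : Fin n => i < j)) := by
        ext j
        simp only [Finset.mem_filter, Finset.mem_univ, true_and, Finset.mem_insert,
          Fin.lt_def, not_lt]
        constructor
        · intro h
          rcases eq_or_lt_of_le h with h | h
          · left; exact Fin.ext h.symm
          · right; exact h
        · rintro (rfl | h)
          · exact le_refl _
          · exact le_of_lt h
      have h3 : i ∉ Finset.univ.filter (fun j : Fin n => i < j) := by simp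
      rw [h1, h2, Finset.sum_insert h3]
      ring
    -- terms for j < i agree
    have hA : ∀ j ∈ Finset.univ.filter (fun j : Fin n => j < i), t σ' j = t σ j := by
      intro j hj
      simp only [Finset.mem_filter, Finset.mem_univ, true_and] at hj
      simp only [ht, hnoteq j (ne_of_lt hj), hg j (le_of_lt hj)]
    have hti' : t σ' i = 0 := by
      simp [ht, heqi, hg i le_rfl]
    have hti : t σ i = 2 ^ (n - 1 - (i : ℕ)) := by
      simp only [ht, if_neg hne, mul_one]
    have hB' : ∑ j ∈ Finset.univ.filter (fun j : Fin n => i < j), t σ' j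
        ≤ ∑ j ∈ Finset.univ.filter (fun j : Fin n => i < j), 2 ^ (n - 1 - (j : ℕ)) := by
      apply Finset.sum_le_sum
      intro j _
      simp only [ht]
      split <;> simp
    calc pot g σ'
        = (∑ j ∈ Finset.univ.filter (fun j : Fin n => j < i), t σ' j) + t σ' i
          + ∑ j ∈ Finset.univ.filter (fun j : Fin n => i < j), t σ' j := hsplit σ'
      _ = (∑ j ∈ Finset.univ.filter (fun j : Fin n => j < i), t σ j)
          + ∑ j ∈ Finset.univ.filter (fun j : Fin n => i < j), t σ' j := by
            rw [Finset.sum_congr rfl hA, hti']; ring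
      _ ≤ (∑ j ∈ Finset.univ.filter (fun j : Fin n => j < i), t σ j)
          + ∑ j ∈ Finset.univ.filter (fun j : Fin n => i < j), 2 ^ (n - 1 - (j : ℕ)) := by
            exact Nat.add_le_add_left hB' _
      _ < (∑ j ∈ Finset.univ.filter (fun j : Fin n => j < i), t σ j)
          + 2 ^ (n - 1 - (i : ℕ)) := by
            exact Nat.add_lt_add_left (sum_gt_two_pow_lt i) _
      _ ≤ (∑ j ∈ Finset.univ.filter (fun j : Fin n => j < i), t σ j) + t σ i
          + ∑ j ∈ Finset.univ.filter (fun j : Fin n => i < j), t σ j := by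
            rw [hti]; omega
      _ = pot g σ := (hsplit σ).symm
  refine ⟨ha, hb, ?_⟩
  by_cases h : σ i = g i σ
  · rw [ha h]
  · exact le_of_lt (hb h)
end

section
/- For a circuit g on n gates in topological order, any iteration of the gate-update functions performs at most 2^n − 1 effective updates: for every store σ₀ and every sequence of gate indices (aᵢ)ᵢ∈ℕ, defining σᵢ₊₁ = f (aᵢ) (σᵢ), the set of indices i with σᵢ₊₁ ≠ σᵢ has cardinality at most b(σ₀), and hence at most 2^n − 1. -/
lemma geom_two (k : ℕ) : (∑ m ∈ Finset.range k, 2 ^ m) + 1 = 2 ^ k := by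
  induction k with
  | zero => simp
  | succ k ih =>
    rw [Finset.sum_range_succ, pow_succ]
    omega

lemma pot_gateUpdate_lt {Val : Type*} [DecidableEq Val] {n : ℕ}
    (g : Fin n → (Fin n → Val) → Val)
    (htopo : ∀ (i : Fin n) (σ σ' : Fin n → Val),
      (∀ j : Fin n, j < i → σ j = σ' j) → g i σ = g i σ')
    (i : Fin n) (σ : Fin n → Val) (h : gateUpdate g i σ ≠ σ) :
    pot g (gateUpdate g i σ) < pot g σ := by
  classical
  set σ' := gateUpdate g i σ with hσ'def
  have hne : ¬ (σ i = g i σ) := by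
    intro he
    apply h
    funext j
    by_cases hj : j = i
    · subst hj; simp [σ', gateUpdate, ← he]
    · simp [σ', gateUpdate, Function.update_of_ne hj]
  have hσ'i : σ' i = g i σ := by simp [σ', gateUpdate]
  have hσ'j : ∀ j : Fin n, j ≠ i → σ' j = σ j := by
    intro j hj; simp [σ', gateUpdate, Function.update_of_ne hj]
  have hgle : ∀ j : Fin n, j ≤ i → g j σ' = g j σ := by
    intro j hj
    refine htopo j σ' σ (fun k hk => hσ'j k ?_)
    intro he
    subst he
    exact absurd (lt_of_lt_of_le hk hj) (lt_irrefl _)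
  set A := Finset.univ.filter (fun j : Fin n => j < i) with hA
  set C := Finset.univ.filter (fun j : Fin n => i < j) with hC
  have hsplit : ∀ F : Fin n → ℕ, ∑ j, F j = (∑ j ∈ A, F j) + F i + ∑ j ∈ C, F j := by
    intro F
    have h1 : (∑ j ∈ Finset.univ.erase i, F j) + F i = ∑ j, F j :=
      Finset.sum_erase_add _ _ (Finset.mem_univ i)
    have h2 : ∑ j ∈ Finset.univ.erase i, F j = (∑ j ∈ A, F j) + ∑ j ∈ C, F j := by
      rw [← Finset.sum_filter_add_sum_filter_not (Finset.univ.erase i)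
        (fun j => j < i)]
      congr 1
      · apply Finset.sum_congr _ (fun _ _ => rfl)
        ext j
        simp only [Finset.mem_filter, Finset.mem_erase, Finset.mem_univ, true_and,
          and_true, hA, Fin.lt_def, Fin.ext_iff]
        omega
      · apply Finset.sum_congr _ (fun _ _ => rfl)
        ext j
        simp only [Finset.mem_filter, Finset.mem_erase, Finset.mem_univ, true_and,
          and_true, hC, Fin.lt_def, Fin.ext_iff]
        omega
    omega
  have hCbound : (∑ j ∈ C, 2 ^ (n - 1 - (j : ℕ))) < 2 ^ (n - 1 - (i : ℕ)) := by
    have himg : ∑ j ∈ C, 2 ^ (n - 1 - (j : ℕ))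
        = ∑ m ∈ C.image (fun j : Fin n => n - 1 - (j : ℕ)), 2 ^ m := by
      rw [Finset.sum_image]
      intro x hx y hy hxy
      simp only [hC, Finset.mem_filter, Finset.mem_univ, true_and, Fin.lt_def] at hx hy
      have hx' := x.isLt
      have hy' := y.isLt
      exact Fin.ext (by simp only at hxy; omega)
    rw [himg]
    calc ∑ m ∈ C.image (fun j : Fin n => n - 1 - (j : ℕ)), 2 ^ m
        ≤ ∑ m ∈ Finset.range (n - 1 - (i : ℕ)), 2 ^ m := by
          apply Finset.sum_le_sum_of_subset
          intro m hm
          simp only [Finset.mem_image] at hm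
          obtain ⟨j, hj, rfl⟩ := hm
          simp only [hC, Finset.mem_filter, Finset.mem_univ, true_and, Fin.lt_def] at hj
          have := j.isLt
          have := i.isLt
          simp only [Finset.mem_range]
          omega
      _ < 2 ^ (n - 1 - (i : ℕ)) := by
          have := geom_two (n - 1 - (i : ℕ)); omega
  have e1 : ∑ j ∈ A, 2 ^ (n - 1 - (j : ℕ)) * (if σ' j = g j σ' then 0 else 1)
      = ∑ j ∈ A, 2 ^ (n - 1 - (j : ℕ)) * (if σ j = g j σ then 0 else 1) := by
    apply Finset.sum_congr rfl
    intro j hj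
    simp only [hA, Finset.mem_filter, Finset.mem_univ, true_and] at hj
    rw [hσ'j j (ne_of_lt hj), hgle j (le_of_lt hj)]
  have e2 : 2 ^ (n - 1 - (i : ℕ)) * (if σ' i = g i σ' then (0 : ℕ) else 1) = 0 := by
    rw [if_pos (by rw [hσ'i, hgle i le_rfl]), mul_zero]
  have e3 : ∑ j ∈ C, 2 ^ (n - 1 - (j : ℕ)) * (if σ' j = g j σ' then 0 else 1)
      ≤ ∑ j ∈ C, 2 ^ (n - 1 - (j : ℕ)) := by
    apply Finset.sum_le_sum
    intro j _
    have : (if σ' j = g j σ' then (0:ℕ) else 1) ≤ 1 := by split <;> omega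
    calc 2 ^ (n - 1 - (j : ℕ)) * (if σ' j = g j σ' then 0 else 1)
        ≤ 2 ^ (n - 1 - (j : ℕ)) * 1 := Nat.mul_le_mul_left _ this
      _ = 2 ^ (n - 1 - (j : ℕ)) := mul_one _
  have e5 : 2 ^ (n - 1 - (i : ℕ)) * (if σ i = g i σ then (0 : ℕ) else 1)
      = 2 ^ (n - 1 - (i : ℕ)) := by rw [if_neg hne, mul_one]
  rw [pot, pot, hsplit, hsplit]
  omega

set_option maxHeartbeats 800000 in
/-- Any iteration of gate-update functions of a circuit in topological order performs
at most `b(σ₀) ≤ 2^n - 1` effective updates. -/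
theorem circuit_iteration_effective_updates_bound
    {Val : Type*} [DecidableEq Val] {n : ℕ}
    (g : Fin n → (Fin n → Val) → Val)
    (htopo : ∀ (i : Fin n) (σ σ' : Fin n → Val),
      (∀ j : Fin n, j < i → σ j = σ' j) → g i σ = g i σ')
    (σ : ℕ → Fin n → Val) (a : ℕ → Fin n)
    (hstep : ∀ i, σ (i + 1) = gateUpdate g (a i) (σ i)) :
    {i : ℕ | σ (i + 1) ≠ σ i}.Finite ∧
    {i : ℕ | σ (i + 1) ≠ σ i}.ncard ≤ pot g (σ 0) ∧
    pot g (σ 0) ≤ 2 ^ n - 1 := by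
  classical
  have hdec : ∀ k, pot g (σ (k + 1)) + (if σ (k + 1) = σ k then 0 else 1)
      ≤ pot g (σ k) := by
    intro k
    by_cases h : σ (k + 1) = σ k
    · simp [h]
    · have hlt : pot g (σ (k + 1)) < pot g (σ k) := by
        rw [hstep k]
        exact pot_gateUpdate_lt g htopo (a k) (σ k) (by rw [← hstep k]; exact h)
      simp only [if_neg h]
      omega
  have hmain : ∀ k,
      ((Finset.range k).filter (fun i => σ (i + 1) ≠ σ i)).card + pot g (σ k)
        ≤ pot g (σ 0) := by
    intro k
    induction k with
    | zero => simp
    | succ k ih =>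
      rw [Finset.range_add_one, Finset.filter_insert]
      have hd := hdec k
      by_cases h : σ (k + 1) = σ k
      · rw [if_neg (by simp [h])]
        simp only [if_pos h] at hd
        omega
      · rw [if_pos h, Finset.card_insert_of_notMem (by simp)]
        simp only [if_neg h] at hd
        omega
  have hB : ∀ t : Finset ℕ, ↑t ⊆ {i : ℕ | σ (i + 1) ≠ σ i} → t.card ≤ pot g (σ 0) := by
    intro t ht
    have hsub : t ⊆ (Finset.range (t.sup id + 1)).filter (fun i => σ (i + 1) ≠ σ i) := by
      intro x hx
      simp only [Finset.mem_filter, Finset.mem_range]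
      exact ⟨Nat.lt_succ_of_le (Finset.le_sup (f := id) hx), ht hx⟩
    calc t.card ≤ _ := Finset.card_le_card hsub
      _ ≤ pot g (σ 0) := by have := hmain (t.sup id + 1); omega
  have hfin : {i : ℕ | σ (i + 1) ≠ σ i}.Finite := by
    by_contra hinf
    obtain ⟨t, hts, htc⟩ := Set.Infinite.exists_subset_card_eq hinf (pot g (σ 0) + 1)
    have := hB t hts
    omega
  refine ⟨hfin, ?_, ?_⟩
  case _ =>
    rw [Set.ncard_eq_toFinset_card _ hfin]
    exact hB _ (by simp)
  case _ =>
    unfold pot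
    calc ∑ i : Fin n, 2 ^ (n - 1 - (i : ℕ)) * (if σ 0 i = g i (σ 0) then 0 else 1)
        ≤ ∑ i : Fin n, 2 ^ (n - 1 - (i : ℕ)) :=
          Finset.sum_le_sum (fun i _ => by split <;> simp)
      _ = ∑ i ∈ Finset.range n, 2 ^ (n - 1 - i) := Fin.sum_univ_eq_sum_range (fun i => 2 ^ (n - 1 - i)) n
      _ = ∑ i ∈ Finset.range n, 2 ^ i := Finset.sum_range_reflect (fun i => 2 ^ i) n
      _ ≤ 2 ^ n - 1 := by have := geom_two n; omega
end

section
/- For a circuit g on n gates in topological order, every regular iteration of the gate-update functions converges to the correct evaluation: for every store σ₀ and every sequence of gate indices (aᵢ)ᵢ∈ℕ with σᵢ₊₁ = f (aᵢ) (σᵢ), if the iteration is regular (for every gate i and index k such that σ_k is not correct at gate i, there is j ≥ k with aⱼ = i), then there exists k such that σⱼ = σ_k for all j ≥ k and σ_k equals the unique store σ* that is correct at every gate. -/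
/-- Every regular iteration of the gate-update functions of a circuit in topological
order stabilizes at the unique store that is correct at every gate. -/
theorem circuit_regular_iteration_converges
    {Val : Type*} {n : ℕ}
    (g : Fin n → (Fin n → Val) → Val)
    (htopo : ∀ (i : Fin n) (σ σ' : Fin n → Val),
      (∀ j : Fin n, j < i → σ j = σ' j) → g i σ = g i σ')
    (σ : ℕ → Fin n → Val) (a : ℕ → Fin n)
    (hstep : ∀ i, σ (i + 1) = gateUpdate g (a i) (σ i))
    (hreg : ∀ (i : Fin n) (k : ℕ), σ k i ≠ g i (σ k) → ∃ j ≥ k, a j = i) :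
    ∃ k, (∀ j ≥ k, σ j = σ k) ∧
      (∀ i : Fin n, σ k i = g i (σ k)) ∧
      (∀ τ : Fin n → Val, (∀ i : Fin n, τ i = g i τ) → τ = σ k) := by
  have key : ∀ m : ℕ, m ≤ n → ∃ k, ∀ j ≥ k, ∀ i : Fin n, (i : ℕ) < m →
      σ j i = σ k i ∧ σ k i = g i (σ k) := by
    intro m
    induction m with
    | zero => exact fun _ => ⟨0, fun j _ i hi => absurd hi (Nat.not_lt_zero _)⟩
    | succ m ih =>
      intro hm
      obtain ⟨k, hk⟩ := ih (Nat.le_of_succ_le hm)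
      set i0 : Fin n := ⟨m, hm⟩ with hi0
      have hlow : ∀ j ≥ k, ∀ l : Fin n, l < i0 → σ j l = σ k l :=
        fun j hj l hl => (hk j hj l hl).1
      have hg : ∀ j ≥ k, g i0 (σ j) = g i0 (σ k) :=
        fun j hj => htopo i0 _ _ (fun l hl => hlow j hj l hl)
      by_cases hc : σ k i0 = g i0 (σ k)
      · refine ⟨k, ?_⟩
        have hstable : ∀ j ≥ k, σ j i0 = σ k i0 := by
          intro j hj
          induction j, hj using Nat.le_induction with
          | base => rfl
          | succ j hj ihj =>
            rw [hstep j]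
            unfold gateUpdate
            by_cases ha : a j = i0
            · rw [ha, Function.update_self, hg j hj, ← hc]
            · rw [Function.update_of_ne (fun h => ha h.symm) _ _]
              exact ihj
        intro j hj i hi
        rcases Nat.lt_succ_iff_lt_or_eq.mp hi with h | h
        · exact hk j hj i h
        · have hii : i = i0 := Fin.ext h
          subst hii
          exact ⟨hstable j hj, hc⟩
      · obtain ⟨j0, hj0k, hj0a⟩ := hreg i0 k hc
        have hlow1 : ∀ l : Fin n, l < i0 → σ (j0 + 1) l = σ k l := by
          intro l hl
          rw [hstep j0]
          unfold gateUpdate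
          rw [Function.update_of_ne (fun h => (Fin.lt_iff_val_lt_val.mp hl).ne (by rw [h, hj0a]))]
          exact hlow j0 hj0k l hl
        have hcorr : σ (j0 + 1) i0 = g i0 (σ (j0 + 1)) := by
          have h1 : σ (j0 + 1) i0 = g i0 (σ j0) := by
            rw [hstep j0, hj0a]; unfold gateUpdate; rw [Function.update_self]
          have h2 : g i0 (σ (j0 + 1)) = g i0 (σ k) := by
            apply htopo
            intro l hl
            exact hlow1 l hl
          rw [h1, hg j0 hj0k, h2]
        have hstable : ∀ j ≥ j0 + 1, σ j i0 = σ (j0 + 1) i0 := by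
          intro j hj
          induction j, hj using Nat.le_induction with
          | base => rfl
          | succ j hj ihj =>
            rw [hstep j]
            unfold gateUpdate
            by_cases ha : a j = i0
            · rw [ha, Function.update_self, hg j (le_trans hj0k (Nat.le_of_succ_le hj)),
                ← hg (j0 + 1) (le_trans hj0k (Nat.le_succ j0)), ← hcorr]
            · rw [Function.update_of_ne (fun h => ha h.symm) _ _]
              exact ihj
        refine ⟨j0 + 1, ?_⟩
        intro j hj i hi
        have hjk : j ≥ k := le_trans hj0k (Nat.le_of_succ_le hj)
        rcases Nat.lt_succ_iff_lt_or_eq.mp hi with h | h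
        · have hik : i < i0 := Fin.lt_iff_val_lt_val.mpr h
          have e1 : σ j i = σ k i := hlow j hjk i hik
          have e2 : σ (j0 + 1) i = σ k i := hlow1 i hik
          have e3 : g i (σ (j0 + 1)) = g i (σ k) := by
            apply htopo
            intro l hl
            exact hlow1 l (lt_trans hl hik)
          refine ⟨by rw [e1, e2], ?_⟩
          rw [e2, e3, (hk k le_rfl i h).2]
        · have hii : i = i0 := Fin.ext h
          subst hii
          exact ⟨hstable j hj, hcorr⟩
  obtain ⟨k, hk⟩ := key n le_rfl
  have hcorrect : ∀ i : Fin n, σ k i = g i (σ k) := fun i => (hk k le_rfl i i.isLt).2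
  refine ⟨k, ?_, hcorrect, ?_⟩
  · intro j hj
    funext i
    exact (hk j hj i i.isLt).1
  · intro τ hτ
    have H : ∀ m : ℕ, ∀ i : Fin n, (i : ℕ) < m → τ i = σ k i := by
      intro m
      induction m with
      | zero => exact fun i hi => absurd hi (Nat.not_lt_zero _)
      | succ m ih =>
        intro i hi
        rcases Nat.lt_succ_iff_lt_or_eq.mp hi with h | h
        · exact ih i h
        · rw [hτ i, hcorrect i]
          apply htopo
          intro l hl
          exact ih l (lt_of_lt_of_le (Fin.lt_iff_val_lt_val.mp hl) (le_of_eq h))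
    funext i
    exact H n i i.isLt
end

section
/- (Correctness of node labels satisfying Bellman's inequalities.) Let V be a finite type, s : V, E : V → V → Prop a decidable edge relation, and w : V → V → ℝ edge weights, and assume the graph has no negative-weight cycles. Let d : V → ℝ be such that (1) for every u : V there exists a simple path from s to u whose weight equals d u, and (2) d v ≤ d u + w u v for every pair u, v with E u v. Then for every u : V, d u is the minimum weight over all walks from s to u; equivalently, d u ≤ weight(q) for every walk q from s to u and this bound is attained by a simple path. -/
/-- The weight of a walk `v₀, v₁, …, v_k`, namely `Σ_{i<k} w vᵢ vᵢ₊₁`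
(a single-vertex walk has weight 0). -/
def walkWeight {V : Type*} (w : V → V → ℝ) : List V → ℝ
  | [] => 0
  | [_] => 0
  | a :: b :: l => w a b + walkWeight w (b :: l)

/-- `p` is a walk from `a` to `b`: a nonempty list of vertices starting at `a`,
ending at `b`, with consecutive vertices joined by edges. -/
def IsWalk {V : Type*} (E : V → V → Prop) (p : List V) (a b : V) : Prop :=
  p ≠ [] ∧ p.head? = some a ∧ p.getLast? = some b ∧ p.Chain' E

lemma bellman_key {V : Type*} (E : V → V → Prop) (w : V → V → ℝ) (d : V → ℝ)
    (hb : ∀ u v : V, E u v → d v ≤ d u + w u v) :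
    ∀ (p : List V) (a b : V), IsWalk E p a b → d b ≤ d a + walkWeight w p
  | [], a, b, h => absurd rfl h.1
  | [x], a, b, h => by
      obtain ⟨_, h1, h2, _⟩ := h
      simp at h1 h2
      subst h1; subst h2
      simp [walkWeight]
  | x :: y :: l, a, b, h => by
      obtain ⟨_, h1, h2, h3⟩ := h
      simp at h1
      subst h1
      simp only [List.Chain', List.isChain_cons_cons] at h3
      have ih := bellman_key E w d hb (y :: l) y b
        ⟨by simp, by simp, by rwa [List.getLast?_cons_cons] at h2, h3.2⟩
      have := hb x y h3.1
      simp only [walkWeight]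
      linarith

/-- **Correctness of node labels satisfying Bellman's inequalities.** If the graph
has no negative-weight cycles, and `d` assigns to every vertex the weight of some
simple path from `s` and satisfies Bellman's inequalities, then `d u` is the minimum
weight over all walks from `s` to `u`, attained by a simple path. -/
theorem bellman_simplePath_labels_are_distances
    {V : Type*} [Fintype V] (s : V) (E : V → V → Prop) [DecidableRel E]
    (w : V → V → ℝ)
    (hnoneg : ∀ (a : V) (p : List V), IsWalk E p a a → 2 ≤ p.length →
      0 ≤ walkWeight w p)
    (d : V → ℝ)
    (hsimple : ∀ u : V, ∃ p : List V,
      IsWalk E p s u ∧ p.Nodup ∧ walkWeight w p = d u)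
    (hbellman : ∀ u v : V, E u v → d v ≤ d u + w u v) :
    ∀ u : V,
      (∀ q : List V, IsWalk E q s u → d u ≤ walkWeight w q) ∧
      ∃ p : List V, IsWalk E p s u ∧ p.Nodup ∧ walkWeight w p = d u := by

  -- d s = 0
  have hds : d s = 0 := by
    obtain ⟨p, hp, hnd, hw⟩ := hsimple s
    obtain ⟨hne, h1, h2, _⟩ := hp
    match p, hne with
    | [x], _ =>
      simp at h1
      subst h1
      simpa [walkWeight] using hw.symm
    | x :: y :: l, _ =>
      simp at h1
      subst h1
      rw [List.getLast?_cons_cons] at h2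
      have hmem : x ∈ y :: l := by
        have h4 : (y :: l).getLast (by simp) = x := by
          rwa [List.getLast?_eq_getLast (l := y :: l) (by simp), Option.some_inj] at h2
        exact h4 ▸ List.getLast_mem (by simp)
      exact absurd hmem (List.nodup_cons.mp hnd).1
  intro u
  refine ⟨fun q hq => ?_, hsimple u⟩
  have := bellman_key E w d hbellman q s u hq
  linarith
end

section
/- (Convergence of incremental shortest-path relaxation.) Let V be a finite type, s : V, E : V → V → Prop a decidable edge relation, and w : V → V → ℝ edge weights; assume the graph has no negative-weight cycles and that every vertex is reachable from s. Let d₀ : V → ℝ be such that for every u there exists a simple path from s to u of weight d₀ u. Consider any sequence (dᵢ)ᵢ∈ℕ with dᵢ₊₁ = relax_{eᵢ}(dᵢ) for some sequence of edges (eᵢ), which is regular in the sense that whenever relax_{u,v}(dᵢ) ≠ dᵢ for an edge (u,v), some step j ≥ i applies relax_{u,v}. Then there exists k such that dⱼ = d_k for all j ≥ k, and for every u : V, d_k u equals the minimum weight over all walks from s to u. -/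
/-- The relaxation function of edge `(u,v)`: if Bellman's inequality is violated,
replace the value at `v` by `d u + w u v`; otherwise leave `d` unchanged. -/
noncomputable def relax {V : Type*} [DecidableEq V] (w : V → V → ℝ)
    (u v : V) (d : V → ℝ) : V → ℝ :=
  if d u + w u v < d v then Function.update d v (d u + w u v) else d


section Helpers
variable {V : Type*}

lemma walkWeight_append (w : V → V → ℝ) (p : List V) (x : V) (q : List V) :
    walkWeight w (p ++ x :: q) = walkWeight w (p ++ [x]) + walkWeight w (x :: q) := by
  induction p with
  | nil => cases q <;> simp [walkWeight]
  | cons a t ih =>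
    cases t with
    | nil => cases q <;> simp [walkWeight]
    | cons b t' =>
      simp only [List.cons_append, List.append_eq, walkWeight] at ih ⊢
      rw [ih]; ring

lemma exists_dup_split {l : List V} (h : ¬ l.Nodup) :
    ∃ (q : List V) (x : V) (r t : List V), l = q ++ x :: (r ++ x :: t) := by
  induction l with
  | nil => simp at h
  | cons a l ih =>
    rw [List.nodup_cons] at h
    by_cases ha : a ∈ l
    · obtain ⟨r, t, rfl⟩ := List.append_of_mem ha
      exact ⟨[], a, r, t, rfl⟩
    · obtain ⟨q, x, r, t, rfl⟩ := ih (fun hn => h ⟨ha, hn⟩)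
      exact ⟨a :: q, x, r, t, rfl⟩

lemma isWalk_concat {E : V → V → Prop} (w : V → V → ℝ) {p : List V} {s a b : V}
    (h : IsWalk E p s a) (hab : E a b) :
    IsWalk E (p ++ [b]) s b ∧ walkWeight w (p ++ [b]) = walkWeight w p + w a b := by
  obtain ⟨hne, hh, hl, hc⟩ := h
  have hdrop : p.dropLast ++ [a] = p := List.dropLast_append_getLast? a (by rw [hl]; rfl)
  constructor
  · refine ⟨by simp, ?_, ?_, ?_⟩
    · cases p with
      | nil => exact absurd rfl hne
      | cons x t => simpa using hh
    · rw [List.getLast?_append_cons]; rfl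
    · refine List.isChain_append.mpr ⟨hc, List.isChain_singleton b, fun x hx y hy => ?_⟩
      rw [hl, Option.mem_some_iff] at hx
      simp only [List.head?_cons, Option.mem_some_iff] at hy
      rw [← hx, ← hy]; exact hab
  · have h2 := walkWeight_append w p.dropLast a [b]
    rw [hdrop] at h2
    have h3 : p.dropLast ++ a :: [b] = p ++ [b] := by
      conv_rhs => rw [← hdrop]
      simp
    rw [h3] at h2
    rw [h2]; simp [walkWeight]

lemma exists_nodup_walk_le (E : V → V → Prop) (w : V → V → ℝ)
    (hnoneg : ∀ (a : V) (p : List V), IsWalk E p a a → 2 ≤ p.length →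
      0 ≤ walkWeight w p) :
    ∀ (n : ℕ) (p : List V) (a b : V), p.length ≤ n → IsWalk E p a b →
      ∃ q, IsWalk E q a b ∧ q.Nodup ∧ walkWeight w q ≤ walkWeight w p := by
  intro n
  induction n with
  | zero =>
    intro p a b hl hw
    exact absurd (List.length_eq_zero_iff.mp (Nat.le_zero.mp hl)) hw.1
  | succ n ih =>
    intro p a b hl hw
    by_cases hnd : p.Nodup
    · exact ⟨p, hw, hnd, le_refl _⟩
    obtain ⟨q, x, r, t, rfl⟩ := exists_dup_split hnd
    obtain ⟨hne, hh, hlast, hchain⟩ := hw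
    rw [List.Chain', List.isChain_append] at hchain
    obtain ⟨hcq, hcrest, hlinkq⟩ := hchain
    have hsplit2 : (x :: (r ++ x :: t)) = (x :: r) ++ (x :: t) := by simp
    rw [hsplit2, List.isChain_append] at hcrest
    obtain ⟨hcxr, hcxt, hlink2⟩ := hcrest
    -- the cycle
    have hcyc : IsWalk E ((x :: r) ++ [x]) x x := by
      refine ⟨by simp, by simp, ?_, ?_⟩
      · rw [List.getLast?_append_cons]; rfl
      · refine List.isChain_append.mpr ⟨hcxr, List.isChain_singleton x, fun u hu y hy => ?_⟩
        simp only [List.head?_cons, Option.mem_some_iff] at hy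
        rw [← hy]; exact hlink2 u hu x rfl
    have hcycw : 0 ≤ walkWeight w ((x :: r) ++ [x]) :=
      hnoneg x _ hcyc (by simp)
    -- the shorter walk
    have hwalk' : IsWalk E (q ++ x :: t) a b := by
      refine ⟨by simp, ?_, ?_, ?_⟩
      · cases q with
        | nil => simpa using hh
        | cons g q' => simpa using hh
      · rw [List.getLast?_append_cons]
        rw [List.getLast?_append_cons, hsplit2, List.getLast?_append_cons] at hlast
        exact hlast
      · refine List.isChain_append.mpr ⟨hcq, hcxt, fun u hu y hy => ?_⟩
        simp only [List.head?_cons, Option.mem_some_iff] at hy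
        rw [← hy]; exact hlinkq u hu x rfl
    have hlen : (q ++ x :: t).length ≤ n := by
      simp only [List.length_append, List.length_cons] at hl ⊢
      omega
    obtain ⟨q', hq', hnd', hle'⟩ := ih (q ++ x :: t) a b hlen hwalk'
    refine ⟨q', hq', hnd', hle'.trans ?_⟩
    have e1 : walkWeight w (q ++ x :: (r ++ x :: t)) =
        walkWeight w (q ++ [x]) + walkWeight w (x :: (r ++ x :: t)) :=
      walkWeight_append w q x (r ++ x :: t)
    have e2 : walkWeight w (x :: (r ++ x :: t)) =
        walkWeight w ((x :: r) ++ [x]) + walkWeight w (x :: t) :=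
      walkWeight_append w (x :: r) x t
    have e3 : walkWeight w (q ++ x :: t) =
        walkWeight w (q ++ [x]) + walkWeight w (x :: t) :=
      walkWeight_append w q x t
    rw [e1, e2, e3]
    linarith

end Helpers

/-- **Convergence of incremental shortest-path relaxation.** On a graph with no
negative-weight cycles in which every vertex is reachable from `s`, any regular
sequence of edge relaxations starting from simple-path labels stabilizes at the
true distances: the minimum walk weight from `s` to each vertex. -/
theorem relaxation_iteration_converges_to_distances
    {V : Type*} [Fintype V] [DecidableEq V]
    (s : V) (E : V → V → Prop) [DecidableRel E] (w : V → V → ℝ)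
    (hnoneg : ∀ (a : V) (p : List V), IsWalk E p a a → 2 ≤ p.length →
      0 ≤ walkWeight w p)
    (hreach : ∀ u : V, ∃ p : List V, IsWalk E p s u)
    (d : ℕ → V → ℝ)
    (hd0 : ∀ u : V, ∃ p : List V,
      IsWalk E p s u ∧ p.Nodup ∧ walkWeight w p = d 0 u)
    (e : ℕ → V × V)
    (he : ∀ i, E (e i).1 (e i).2)
    (hstep : ∀ i, d (i + 1) = relax w (e i).1 (e i).2 (d i))
    (hreg : ∀ u v : V, E u v → ∀ i, relax w u v (d i) ≠ d i →
      ∃ j ≥ i, e j = (u, v)) :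
    ∃ k, (∀ j ≥ k, d j = d k) ∧
      ∀ u : V,
        (∀ q : List V, IsWalk E q s u → d k u ≤ walkWeight w q) ∧
        ∃ q : List V, IsWalk E q s u ∧ walkWeight w q = d k u := by
  classical
  -- basic facts about relax
  have relax_apply_le : ∀ (u v : V) (f : V → ℝ) (x : V), relax w u v f x ≤ f x := by
    intro u v f x
    unfold relax
    split_ifs with h
    · rw [Function.update_apply]
      split_ifs with hx
      · subst hx; linarith
      · exact le_refl _
    · exact le_refl _
  have relax_le_bound : ∀ (u v : V) (f : V → ℝ), relax w u v f v ≤ f u + w u v := by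
    intro u v f
    unfold relax
    split_ifs with h
    · rw [Function.update_self]
    · linarith
  have mono : ∀ (u : V) {i j : ℕ}, i ≤ j → d j u ≤ d i u := by
    intro u i j hij
    induction j, hij using Nat.le_induction with
    | base => exact le_refl _
    | succ j hij ih =>
      calc d (j + 1) u ≤ d j u := by rw [hstep j]; exact relax_apply_le _ _ _ _
        _ ≤ d i u := ih
  -- every current label is realized by some walk
  have invariant : ∀ (i : ℕ) (u : V), ∃ p, IsWalk E p s u ∧ walkWeight w p = d i u := by
    intro i
    induction i with
    | zero =>
      intro u
      obtain ⟨p, hw, _, hwt⟩ := hd0 u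
      exact ⟨p, hw, hwt⟩
    | succ i ih =>
      intro u
      rw [hstep i]
      unfold relax
      split_ifs with h
      · rw [Function.update_apply]
        split_ifs with hu
        · subst hu
          obtain ⟨p, hp, hwt⟩ := ih (e i).1
          obtain ⟨hw2, heq⟩ := isWalk_concat (w := w) hp (he i)
          exact ⟨p ++ [(e i).2], hw2, by rw [heq, hwt]⟩
        · exact ih u
      · exact ih u
  -- minimal nodup walks
  have hminex : ∀ u : V, ∃ p, (IsWalk E p s u ∧ p.Nodup) ∧
      ∀ q, IsWalk E q s u → walkWeight w p ≤ walkWeight w q := by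
    intro u
    have hfin : {p : List V | IsWalk E p s u ∧ p.Nodup}.Finite :=
      (List.finite_length_le V (Fintype.card V)).subset
        (fun p hp => hp.2.length_le_card)
    have hne : {p : List V | IsWalk E p s u ∧ p.Nodup}.Nonempty := by
      obtain ⟨p, hp⟩ := hreach u
      obtain ⟨q, hq, hnd, -⟩ :=
        exists_nodup_walk_le E w hnoneg p.length p s u le_rfl hp
      exact ⟨q, hq, hnd⟩
    obtain ⟨p, hp, hmin'⟩ := Set.exists_min_image _ (walkWeight w) hfin hne
    refine ⟨p, hp, fun q hq => ?_⟩
    obtain ⟨q', hq', hnd', hle⟩ :=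
      exists_nodup_walk_le E w hnoneg q.length q s u le_rfl hq
    exact (hmin' q' ⟨hq', hnd'⟩).trans hle
  choose pm hpm hpmle using hminex
  have hlow : ∀ (i : ℕ) (u : V), walkWeight w (pm u) ≤ d i u := by
    intro i u
    obtain ⟨p, hp, hwt⟩ := invariant i u
    rw [← hwt]
    exact hpmle u p hp
  -- the source starts at 0
  have hd0s : d 0 s = 0 := by
    obtain ⟨p, hw, hnd, hwt⟩ := hd0 s
    obtain ⟨hne, hh, hl, -⟩ := hw
    match p, hne, hh, hl, hnd, hwt with
    | [x], _, hh, _, _, hwt =>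
      rw [← hwt]; rfl
    | x :: y :: l, _, hh, hl, hnd, _ =>
      exfalso
      simp only [List.head?_cons, Option.some.injEq] at hh
      rw [List.getLast?_cons_cons] at hl
      have hs : s ∈ y :: l := by
        obtain ⟨h', h2⟩ := List.mem_getLast?_eq_getLast (x := s) (by rw [hl]; rfl)
        rw [h2]; exact List.getLast_mem h'
      rw [List.nodup_cons] at hnd
      exact hnd.1 (by rw [hh]; exact hs)
  -- eventually the label is below the weight of any given walk
  have upper : ∀ (n : ℕ) (p : List V) (u : V), p.length ≤ n → IsWalk E p s u →
      ∃ N, ∀ j ≥ N, d j u ≤ walkWeight w p := by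
    intro n
    induction n with
    | zero =>
      intro p u hl hw
      exact absurd (List.length_eq_zero_iff.mp (Nat.le_zero.mp hl)) hw.1
    | succ n ih =>
      intro p u hl hw
      rcases List.eq_nil_or_concat' p with rfl | ⟨p₀, a, rfl⟩
      · exact absurd rfl hw.1
      obtain ⟨hne, hh, hlast, hchain⟩ := hw
      have hua : u = a := by
        rw [List.getLast?_append_cons] at hlast
        simpa using hlast.symm
      subst hua
      rcases List.eq_nil_or_concat' p₀ with rfl | ⟨p₁, b, rfl⟩
      · -- p = [u]
        have hsu : u = s := by simpa using hh
        subst hsu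
        refine ⟨0, fun j _ => ?_⟩
        have : walkWeight w ([] ++ [u]) = 0 := rfl
        rw [this, ← hd0s]
        exact mono u (Nat.zero_le j)
      · -- p = (p₁ ++ [b]) ++ [u]
        rw [List.Chain', List.isChain_append] at hchain
        obtain ⟨hc0, -, hlink⟩ := hchain
        have hba : E b u := by
          refine hlink b ?_ u rfl
          rw [List.getLast?_append_cons]; rfl
        have hw0 : IsWalk E (p₁ ++ [b]) s b := by
          refine ⟨by simp, ?_, ?_, hc0⟩
          · cases hp : p₁ ++ [b] with
            | nil => simp at hp
            | cons g q' => rw [hp] at hh; simpa using hh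
          · rw [List.getLast?_append_cons]; rfl
        have hweq : walkWeight w ((p₁ ++ [b]) ++ [u]) =
            walkWeight w (p₁ ++ [b]) + w b u := by
          have h2 := walkWeight_append w p₁ b [u]
          have h3 : p₁ ++ b :: [u] = (p₁ ++ [b]) ++ [u] := by simp
          rw [h3] at h2
          rw [h2]
          simp [walkWeight]
        obtain ⟨N, hN⟩ := ih (p₁ ++ [b]) b (by simp at hl ⊢; omega) hw0
        rw [hweq]
        by_cases hc : d N u ≤ d N b + w b u
        · refine ⟨N, fun j hj => ?_⟩
          calc d j u ≤ d N u := mono u hj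
            _ ≤ d N b + w b u := hc
            _ ≤ walkWeight w (p₁ ++ [b]) + w b u := by
                have := hN N (le_refl N); linarith
        · push_neg at hc
          have hchg : relax w b u (d N) ≠ d N := by
            intro hEq
            have h4 := congrFun hEq u
            unfold relax at h4
            rw [if_pos hc, Function.update_self] at h4
            linarith
          obtain ⟨j, hj, hej⟩ := hreg b u hba N hchg
          refine ⟨j + 1, fun m hm => ?_⟩
          have h1 : d (j + 1) u ≤ d j b + w b u := by
            rw [hstep j, hej]
            exact relax_le_bound b u (d j)
          calc d m u ≤ d (j + 1) u := mono u hm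
            _ ≤ d j b + w b u := h1
            _ ≤ walkWeight w (p₁ ++ [b]) + w b u := by
                have := hN j hj; linarith
  -- stabilization time for each vertex
  have stab : ∀ u : V, ∃ N, ∀ j ≥ N, d j u = walkWeight w (pm u) := by
    intro u
    obtain ⟨N, hN⟩ := upper (pm u).length (pm u) u le_rfl (hpm u).1
    exact ⟨N, fun j hj => le_antisymm (hN j hj) (hlow j u)⟩
  choose N hNs using stab
  refine ⟨Finset.univ.sup N, ?_, ?_⟩
  · intro j hj
    funext u
    rw [hNs u j (le_trans (Finset.le_sup (Finset.mem_univ u)) hj),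
      hNs u _ (Finset.le_sup (Finset.mem_univ u))]
  · intro u
    have hk : d (Finset.univ.sup N) u = walkWeight w (pm u) :=
      hNs u _ (Finset.le_sup (Finset.mem_univ u))
    constructor
    · intro q hq
      rw [hk]
      exact hpmle u q hq
    · exact ⟨pm u, (hpm u).1, hk.symm⟩
end
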